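/- arXiv:math/0207102 — 4 statements merged into one kernel-verified Lean document; each statement's English description precedes it below -/
import Mathlib

section
/- Let k ≥ 1 and ℓ ≥ 0 be integers, and let x_0, …, x_ℓ be indeterminates. The set of homogeneous polynomials of degree k in Z[x_0, …, x_ℓ] is generated, as a Z-module, by the k×k minors of the k×(k+ℓ) 'banded' matrix R(k,ℓ) whose (i,j) entry is x_{j-i} (with the convention x_m = 0 for m < 0 or m > ℓ). -/
/-!
Choose the columns of a minor of `R(k,ℓ)` so that its diagonal is `x_{e₀} ⋯ x_{e_{k-1}}` for a
given monotone `e`, i.e. take columns `cᵢ = eᵢ + i`. Every other nonzero term of the Leibniz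
expansion, coming from a permutation `σ ≠ 1`, is the monomial `∏ x_{cᵢ - σ i}`, and by the strict
rearrangement inequality `∑ (cᵢ - σ i)² > ∑ (cᵢ - i)² = ∑ eᵢ²`. So, by descending induction on
`∑ eᵢ²`, every monomial of degree `k` is a linear combination of minors.
-/

open Finset

theorem sum_sq_sub_lt_sum_sq_sub_comp_perm {ι 𝕜 : Type*} [Fintype ι] [LinearOrder ι]
    [CommRing 𝕜] [LinearOrder 𝕜] [IsStrictOrderedRing 𝕜] {f g : ι → 𝕜}
    (hf : StrictMono f) (hg : StrictMono g) {σ : Equiv.Perm ι} (hσ : σ ≠ 1) :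
    ∑ i, (f i - g i) ^ 2 < ∑ i, (f i - g (σ i)) ^ 2 := by
  have hnot : ¬Monovary f (g ∘ σ) := fun h => hσ <| Equiv.ext fun _ =>
    StrictMono.apply_eq fun i j hij => lt_of_not_ge fun hji => hij.not_ge <| hf.le_iff_le.mp <|
      h <| hg.lt_iff_lt.mpr <| hji.lt_of_ne (σ.injective.ne hij.ne')
  have hmul := ((hf.monotone.monovary hg.monotone).sum_mul_comp_perm_lt_sum_mul_iff).mpr hnot
  have hsq : ∑ i, g (σ i) ^ 2 = ∑ i, g i ^ 2 := Equiv.sum_comp σ fun i => g i ^ 2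
  simp only [sub_sq, sum_add_distrib, sum_sub_distrib, mul_assoc, ← mul_sum] at hsq ⊢
  linarith

namespace MvPolynomial

theorem isHomogeneous_det {R n σ : Type*} [CommRing R] [Fintype n] [DecidableEq n]
    (M : Matrix n n (MvPolynomial σ R)) (hM : ∀ i j, (M i j).IsHomogeneous 1) :
    M.det.IsHomogeneous (Fintype.card n) := by
  rw [Matrix.det_apply]
  refine IsHomogeneous.sum _ _ _ fun σ _ => ?_
  rw [Units.smul_def, ← mem_homogeneousSubmodule]
  refine zsmul_mem ?_ _
  rw [mem_homogeneousSubmodule, Fintype.card, card_eq_sum_ones]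
  exact IsHomogeneous.prod _ _ _ fun i _ => hM (σ i) i

variable {R σ : Type*} [CommSemiring R] {k : ℕ}

theorem exists_prod_X_eq_monomial {d : σ →₀ ℕ} (hd : d.degree = k) :
    ∃ e : Fin k → σ, ∏ i, X (e i) = monomial d (1 : R) := by
  set l := d.toMultiset.toList
  have hlen : l.length = k := by
    simp [l, ← hd, Finsupp.card_toMultiset, Finsupp.degree_apply, Finsupp.sum]
  refine ⟨fun i => l[(i : ℕ)], ?_⟩
  rw [← Fin.prod_congr' _ hlen]
  simp only [Fin.val_cast]
  rw [Fin.prod_univ_fun_getElem, ← prod_X_pow_eq_monomial, ← Multiset.prod_coe, ← Multiset.map_coe,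
    Multiset.coe_toList, Finsupp.toMultiset_map, Finsupp.prod_toMultiset,
    Finsupp.prod_mapDomain_index (fun _ => pow_zero _) fun _ _ _ => pow_add _ _ _]
  rfl

theorem isHomogeneous_prod_X (e : Fin k → σ) :
    (∏ i, X (e i) : MvPolynomial σ R).IsHomogeneous k := by
  simpa using IsHomogeneous.prod univ (fun i => (X (e i) : MvPolynomial σ R)) (fun _ => 1)
    fun i _ => isHomogeneous_X R (e i)

variable (σ R k) in
theorem homogeneousSubmodule_eq_span_prod_X :
    homogeneousSubmodule σ R k =
      Submodule.span R (Set.range fun e : Fin k → σ => ∏ i, X (e i)) := by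
  refine le_antisymm ?_ (Submodule.span_le.mpr ?_)
  · rw [homogeneousSubmodule_eq_finsupp_supported, AddMonoidAlgebra.supported_eq_span_single,
      Submodule.span_le]
    rintro _ ⟨d, hd, rfl⟩
    obtain ⟨e, he⟩ := exists_prod_X_eq_monomial (R := R) hd
    exact Submodule.subset_span ⟨e, he⟩
  · rintro _ ⟨e, rfl⟩
    exact isHomogeneous_prod_X e

end MvPolynomial

open MvPolynomial

noncomputable def bandedMatrix (R : Type*) [CommRing R] (k ℓ : ℕ) :
    Matrix (Fin k) (Fin (k + ℓ)) (MvPolynomial (Fin (ℓ + 1)) R) :=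
  fun i j =>
    if h : (i : ℕ) ≤ (j : ℕ) ∧ (j : ℕ) - (i : ℕ) ≤ ℓ then
      MvPolynomial.X ⟨(j : ℕ) - (i : ℕ), Nat.lt_succ_of_le h.2⟩
    else 0

noncomputable def bandedMinorSpan (R : Type*) [CommRing R] (k ℓ : ℕ) :
    Submodule R (MvPolynomial (Fin (ℓ + 1)) R) :=
  Submodule.span R {p | ∃ c : Fin k → Fin (k + ℓ), p = ((bandedMatrix R k ℓ).submatrix id c).det}

section Banded

variable {R : Type*} [CommRing R] {k ℓ : ℕ}

theorem isHomogeneous_bandedMatrix_apply (i : Fin k) (j : Fin (k + ℓ)) :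
    (bandedMatrix R k ℓ i j).IsHomogeneous 1 := by
  unfold bandedMatrix
  split_ifs
  exacts [isHomogeneous_X R _, isHomogeneous_zero _ _ _]

theorem prod_bandedMatrix_eq_zero_or_eq_prod_X {m : ℕ} (r : Fin m → Fin k)
    (c : Fin m → Fin (k + ℓ)) :
    ∏ i, bandedMatrix R k ℓ (r i) (c i) = 0 ∨
      ∃ e : Fin m → Fin (ℓ + 1), (∀ i, ((e i : ℕ) : ℤ) = (c i : ℕ) - (r i : ℕ)) ∧
        ∏ i, bandedMatrix R k ℓ (r i) (c i) = ∏ i, X (e i) := by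
  by_cases h : ∀ i, (r i : ℕ) ≤ c i ∧ (c i : ℕ) - r i ≤ ℓ
  · exact .inr ⟨fun i => ⟨c i - r i, Nat.lt_succ_of_le (h i).2⟩, fun i => by simp [(h i).1],
      prod_congr rfl fun i _ => dif_pos (h i)⟩
  · obtain ⟨i, hi⟩ := not_forall.mp h
    exact .inl (prod_eq_zero (mem_univ i) (dif_neg hi))

theorem bandedMinorSpan_le_homogeneousSubmodule :
    bandedMinorSpan R k ℓ ≤ homogeneousSubmodule (Fin (ℓ + 1)) R k := by
  refine Submodule.span_le.mpr ?_
  rintro _ ⟨c, rfl⟩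
  simpa only [SetLike.mem_coe, mem_homogeneousSubmodule, Fintype.card_fin] using
    isHomogeneous_det ((bandedMatrix R k ℓ).submatrix id c) fun i j =>
      isHomogeneous_bandedMatrix_apply i (c j)

theorem prod_X_mem_bandedMinorSpan_of_monotone {e : Fin k → Fin (ℓ + 1)} (he : Monotone e)
    (ih : ∀ e' : Fin k → Fin (ℓ + 1), ∑ i, (e i : ℕ) ^ 2 < ∑ i, (e' i : ℕ) ^ 2 →
      ∏ i, X (e' i) ∈ bandedMinorSpan R k ℓ) :
    ∏ i, X (e i) ∈ bandedMinorSpan R k ℓ := by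
  let c : Fin k → Fin (k + ℓ) := fun i => ⟨e i + i, by omega⟩
  have hc : StrictMono fun i => ((c i : ℕ) : ℤ) := fun i j hij => by
    have := he hij.le
    simp only [c, Fin.lt_def] at hij ⊢
    omega
  have hdiag : ∏ i, bandedMatrix R k ℓ i (c i) = ∏ i, X (e i) :=
    prod_congr rfl fun i _ => by simp [bandedMatrix, c, (e i).is_le]
  have hdet : ((bandedMatrix R k ℓ).submatrix id c).det = ∏ i, X (e i) +
      ∑ σ ∈ univ.erase 1, Equiv.Perm.sign σ • ∏ i, bandedMatrix R k ℓ (σ i) (c i) := by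
    rw [Matrix.det_apply, ← add_sum_erase _ _ (mem_univ 1)]
    simp [hdiag]
  have hterm : ∀ σ ∈ univ.erase (1 : Equiv.Perm (Fin k)),
      ∏ i, bandedMatrix R k ℓ (σ i) (c i) ∈ bandedMinorSpan R k ℓ := by
    intro σ hσ
    obtain h | ⟨e', he', h⟩ := prod_bandedMatrix_eq_zero_or_eq_prod_X (R := R) σ c
    · rw [h]
      exact zero_mem _
    · rw [h]
      refine ih e' ?_
      have := sum_sq_sub_lt_sum_sq_sub_comp_perm hc (g := fun i : Fin k => ((i : ℕ) : ℤ))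
        (fun _ _ h => by simpa using h) (ne_of_mem_erase hσ)
      zify
      simpa [he', c] using this
  rw [eq_sub_of_add_eq hdet.symm]
  exact sub_mem (Submodule.subset_span ⟨c, rfl⟩)
    (sum_mem fun σ hσ => by rw [Units.smul_def]; exact zsmul_mem (hterm σ hσ) _)

theorem prod_X_mem_bandedMinorSpan (e : Fin k → Fin (ℓ + 1)) :
    ∏ i, X (e i) ∈ bandedMinorSpan R k ℓ := by
  induction hn : k * ℓ ^ 2 - ∑ i, (e i : ℕ) ^ 2 using Nat.strong_induction_on generalizing e with
  | _ n ih =>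
  have hbound (e' : Fin k → Fin (ℓ + 1)) : ∑ i, (e' i : ℕ) ^ 2 ≤ k * ℓ ^ 2 :=
    (sum_le_card_nsmul _ _ _ fun i _ => Nat.pow_le_pow_left (e' i).is_le 2).trans (by simp)
  have hprod : ∏ i, X (e (Tuple.sort e i)) = ∏ i, (X (e i) : MvPolynomial _ R) :=
    Equiv.prod_comp _ fun i => X (e i)
  have hsum : ∑ i, (e (Tuple.sort e i) : ℕ) ^ 2 = ∑ i, (e i : ℕ) ^ 2 :=
    Equiv.sum_comp _ fun i => (e i : ℕ) ^ 2
  rw [← hprod]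
  refine prod_X_mem_bandedMinorSpan_of_monotone (Tuple.monotone_sort e) fun e' he' =>
    ih _ ?_ e' rfl
  have := hbound e'
  omega

theorem bandedMinorSpan_eq_homogeneousSubmodule :
    bandedMinorSpan R k ℓ = homogeneousSubmodule (Fin (ℓ + 1)) R k := by
  refine le_antisymm bandedMinorSpan_le_homogeneousSubmodule ?_
  rw [homogeneousSubmodule_eq_span_prod_X, Submodule.span_le]
  rintro _ ⟨e, rfl⟩
  exact prod_X_mem_bandedMinorSpan e

end Banded

theorem stmt2_general (k ℓ : ℕ) :
    letI R : Matrix (Fin k) (Fin (k + ℓ)) (MvPolynomial (Fin (ℓ + 1)) ℤ) :=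
      fun i j =>
        if h : (i : ℕ) ≤ (j : ℕ) ∧ (j : ℕ) - (i : ℕ) ≤ ℓ then
          MvPolynomial.X ⟨(j : ℕ) - (i : ℕ), Nat.lt_succ_of_le h.2⟩
        else 0
    Submodule.span ℤ
        {p : MvPolynomial (Fin (ℓ + 1)) ℤ |
          ∃ c : Fin k → Fin (k + ℓ), p = (R.submatrix id c).det}
      = MvPolynomial.homogeneousSubmodule (Fin (ℓ + 1)) ℤ k :=
  bandedMinorSpan_eq_homogeneousSubmodule

/-- Let `k ≥ 1`, `ℓ ≥ 0` and let `x_0, …, x_ℓ` be indeterminates.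
The homogeneous polynomials of degree `k` in `ℤ[x_0,…,x_ℓ]` are generated, as a
`ℤ`-module, by the `k×k` minors of the `k×(k+ℓ)` banded matrix `R(k,ℓ)` whose
`(i,j)` entry is `x_{j-i}` (with `x_m = 0` for `m < i` or `m > ℓ + i`). -/
theorem stmt2 (k ℓ : ℕ) (hk : 1 ≤ k) :
    letI R : Matrix (Fin k) (Fin (k + ℓ)) (MvPolynomial (Fin (ℓ + 1)) ℤ) :=
      fun i j =>
        if h : (i : ℕ) ≤ (j : ℕ) ∧ (j : ℕ) - (i : ℕ) ≤ ℓ then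
          MvPolynomial.X ⟨(j : ℕ) - (i : ℕ), Nat.lt_succ_of_le h.2⟩
        else 0
    Submodule.span ℤ
        {p : MvPolynomial (Fin (ℓ + 1)) ℤ |
          ∃ c : Fin k → Fin (k + ℓ), p = (R.submatrix id c).det}
      = MvPolynomial.homogeneousSubmodule (Fin (ℓ + 1)) ℤ k :=
  stmt2_general k ℓ
end

section
/- Let K be a number field, ξ an element of the completion K_w at a place w, and let P, Q ∈ K[T] be relatively prime nonzero polynomials of degree at most n. Then 1 ≤ (2n)! · max{ |P(ξ)|_w / ∥P∥_w , |Q(ξ)|_w / ∥Q∥_w } · H(P)^{deg Q} · H(Q)^{deg P}. -/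
open Polynomial Finset

/-- An abstract family of normalized absolute values on a field `K`, indexed by a set
of "places" `ι`, satisfying the product formula.  This axiomatizes the places of a
number field `K` of degree `d` over `ℚ`, normalized as in Bombieri–Vaaler: `e i = d_v/d`
is the local weight at an archimedean place (the weights sum to `1`), while `e i = 0`
at an ultrametric place. -/
structure PlaceData (K : Type*) [Field K] (ι : Type*) where
  /-- the normalized absolute value at each place -/
  v : ι → AbsoluteValue K ℝ
  /-- the local weight `d_v/d` at archimedean places, `0` at ultrametric places -/
  e : ι → ℝ
  e_nonneg : ∀ i, 0 ≤ e i
  e_sum : ∑ᶠ i, e i = 1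
  /-- places of weight `0` are ultrametric -/
  ultra : ∀ i, e i = 0 → ∀ x y : K, v i (x + y) ≤ max (v i x) (v i y)
  /-- at an archimedean place of weight `e i`, `|m·x| = m^{e i}·|x|` for natural `m` -/
  arch_nat : ∀ i, 0 < e i → ∀ (x : K) (m : ℕ), v i ((m : K) * x) ≤ (m : ℝ) ^ (e i) * v i x
  mulSupport_finite : ∀ x : K, x ≠ 0 → (Function.mulSupport fun i => v i x).Finite
  product_formula : ∀ x : K, x ≠ 0 → ∏ᶠ i, v i x = 1

variable {K : Type*} [Field K] {ι : Type*}

/-- the `v`-adic norm `‖P‖_v` of a polynomial: the maximal absolute value of its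
coefficients. -/
noncomputable def PlaceData.polyNorm (pd : PlaceData K ι) (i : ι) (P : K[X]) : ℝ :=
  (Finset.range (P.natDegree + 1)).sup' Finset.nonempty_range_add_one fun m => pd.v i (P.coeff m)

/-- the (absolute, multiplicative) height `H(P) = ∏_v ‖P‖_v` of a polynomial. -/
noncomputable def PlaceData.polyHeight (pd : PlaceData K ι) (P : K[X]) : ℝ :=
  ∏ᶠ i, pd.polyNorm i P

/-! The resultant `R = Res(P, Q)` is a nonzero element of `K`, so `∏_v |R|_v = 1`. Expanding the
Sylvester determinant gives `|R|_v ≤ N!^{e_v} ‖P‖_v^{deg Q} ‖Q‖_v^{deg P}` at every place, with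
`N = deg P + deg Q` (at an archimedean place the factor `N!^{e_v}` comes from the tensor-power
trick, since `|m|_v ≤ m^{e_v}`). At `w` one first replaces a row of the Sylvester matrix by the
combination `∑ ξ^k (row k)`, whose entries are `P(ξ) ξ^j` and `Q(ξ) ξ^j`; this gains the factor
`max(|P(ξ)|_w/‖P‖_w, |Q(ξ)|_w/‖Q‖_w)`. Multiplying over all places, `∑ e_v = 1` and the product
formula give the inequality with `N! ≤ (2n)!`. -/

theorem Finset.card_piAntidiag_le {α : Type*} [DecidableEq α] (s : Finset α) (t : ℕ) :
    #(piAntidiag s t) ≤ (t + 1) ^ #s := by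
  calc #(piAntidiag s t) ≤ #(Fintype.piFinset fun _ : s => range (t + 1)) := by
        refine card_le_card_of_injOn (fun k i => k i) (fun k hk => ?_) (fun k hk k' hk' hkk' => ?_)
        · rw [mem_coe, mem_piAntidiag] at hk
          simpa [Nat.lt_succ_iff, ← hk.1] using fun i hi => single_le_sum (by simp) hi
        · rw [mem_coe, mem_piAntidiag] at hk hk'
          funext i
          by_cases hi : i ∈ s
          · exact congrFun hkk' ⟨i, hi⟩
          · rw [of_not_not (mt (hk.2 i) hi), of_not_not (mt (hk'.2 i) hi)]
    _ = (t + 1) ^ #s := by simp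

theorem Nat.multinomial_le_card_pow {α : Type*} [DecidableEq α] {s : Finset α} {t : ℕ}
    {k : α → ℕ} (hk : k ∈ piAntidiag s t) : Nat.multinomial s k ≤ #s ^ t := by
  have hsum := (sum_pow_eq_sum_piAntidiag s (fun _ => (1 : ℕ)) t).symm
  simp only [sum_const, smul_eq_mul, mul_one, one_pow, prod_const_one] at hsum
  exact hsum ▸ single_le_sum (fun _ _ => Nat.zero_le _) hk

open Filter Topology in
theorem Real.le_of_forall_pow_le_mul_pow {x K : ℝ} (k : ℕ) (hK : 0 ≤ K)
    (h : ∀ t : ℕ, x ^ t ≤ ((t : ℝ) + 1) ^ k * K ^ t) : x ≤ K := by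
  by_contra! hKx
  obtain ⟨K', hKK', hK'x⟩ := exists_between hKx
  have hK' : 0 < K' := hK.trans_lt hKK'
  have hx : 0 < x := hK'.trans hK'x
  have hr : 1 < x / K' := (one_lt_div hK').2 hK'x
  have hlim : Tendsto (fun t : ℕ => ((t : ℝ) + 1) ^ k / (x / K') ^ t) atTop (𝓝 0) := by
    have := ((tendsto_pow_const_div_const_pow_of_one_lt k hr).comp
      (tendsto_add_atTop_nat 1)).const_mul (x / K')
    rw [mul_zero] at this
    refine this.congr fun t => ?_
    simp only [Function.comp_apply, Nat.cast_add, Nat.cast_one, pow_succ]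
    field_simp
  obtain ⟨t, ht⟩ := (hlim.eventually (gt_mem_nhds one_pos)).exists
  have hxt : x ^ t ≤ ((t : ℝ) + 1) ^ k * K' ^ t :=
    (h t).trans (by gcongr)
  rw [div_lt_one (by positivity), div_pow, lt_div_iff₀ (by positivity)] at ht
  linarith

namespace AbsoluteValue

variable {F : Type*} [CommRing F] [Nontrivial F] (a : AbsoluteValue F ℝ) {e : ℝ}

theorem pow_sum_le (he : 0 ≤ e) (hnat : ∀ m : ℕ, a m ≤ (m : ℝ) ^ e) {α : Type*}
    (s : Finset α) (f : α → F) {B : ℝ} (hB : ∀ j ∈ s, a (f j) ≤ B) (hB0 : 0 ≤ B) (t : ℕ) :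
    a (∑ j ∈ s, f j) ^ t ≤ ((t : ℝ) + 1) ^ #s * ((#s : ℝ) ^ e * B) ^ t := by
  classical
  have hterm : ∀ k ∈ piAntidiag s t,
      a (Nat.multinomial s k * ∏ i ∈ s, f i ^ k i) ≤ ((#s : ℝ) ^ e * B) ^ t := by
    intro k hk
    have hmult : a (Nat.multinomial s k : F) ≤ ((#s : ℝ) ^ e) ^ t := by
      rw [Real.rpow_pow_comm (Nat.cast_nonneg _)]
      exact (hnat _).trans (Real.rpow_le_rpow (Nat.cast_nonneg _)
        (mod_cast Nat.multinomial_le_card_pow hk) he)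
    have hprod : a (∏ i ∈ s, f i ^ k i) ≤ B ^ t := by
      rw [map_prod, ← (mem_piAntidiag.1 hk).1, ← prod_pow_eq_pow_sum]
      exact prod_le_prod (fun _ _ => by positivity) fun i hi => by
        rw [map_pow]; exact pow_le_pow_left₀ (a.nonneg _) (hB i hi) _
    rw [map_mul, mul_pow]
    exact mul_le_mul hmult hprod (a.nonneg _) (by positivity)
  calc a (∑ j ∈ s, f j) ^ t
      = a (∑ k ∈ piAntidiag s t, Nat.multinomial s k * ∏ i ∈ s, f i ^ k i) := by
        rw [← map_pow, sum_pow_eq_sum_piAntidiag]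
    _ ≤ ∑ k ∈ piAntidiag s t, a (Nat.multinomial s k * ∏ i ∈ s, f i ^ k i) := a.sum_le _ _
    _ ≤ #(piAntidiag s t) * ((#s : ℝ) ^ e * B) ^ t := by
        simpa using sum_le_sum hterm
    _ ≤ ((t : ℝ) + 1) ^ #s * ((#s : ℝ) ^ e * B) ^ t := by
        gcongr
        exact_mod_cast card_piAntidiag_le s t

theorem sum_le_card_rpow_mul (he : 0 ≤ e) (hnat : ∀ m : ℕ, a m ≤ (m : ℝ) ^ e) {α : Type*}
    {s : Finset α} (hs : s.Nonempty) (f : α → F) {B : ℝ} (hB : ∀ j ∈ s, a (f j) ≤ B) :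
    a (∑ j ∈ s, f j) ≤ (#s : ℝ) ^ e * B :=
  have hB0 : 0 ≤ B := (a.nonneg _).trans (hB _ hs.choose_spec)
  Real.le_of_forall_pow_le_mul_pow #s (by positivity) (a.pow_sum_le he hnat s f hB hB0)

theorem det_le (he : 0 ≤ e) (hnat : ∀ m : ℕ, a m ≤ (m : ℝ) ^ e) {n : Type*} [Fintype n]
    [DecidableEq n] (A : Matrix n n F) (h g : n → ℝ) (hA : ∀ i j, a (A i j) ≤ h i * g j) :
    a A.det ≤ ((Fintype.card n).factorial : ℝ) ^ e * ((∏ i, h i) * ∏ j, g j) := by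
  rw [Matrix.det_apply, ← Fintype.card_perm, ← card_univ]
  refine a.sum_le_card_rpow_mul he hnat univ_nonempty _ fun σ _ => ?_
  rw [a.map_units_int_smul, map_prod, ← Equiv.prod_comp σ h, ← prod_mul_distrib]
  exact prod_le_prod (fun _ _ => a.nonneg _) fun i _ => hA _ _

end AbsoluteValue

namespace Polynomial

variable {R : Type*} [Semiring R] {f g : R[X]} {m n : ℕ}

theorem sylvester_apply_castAdd (hg : g.natDegree ≤ n) (i : Fin (m + n)) (j : Fin m) :
    sylvester f g m n i (Fin.castAdd n j) = (g * X ^ (j : ℕ)).coeff i := by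
  rw [sylvester, Matrix.of_apply, Fin.addCases_left, coeff_mul_X_pow']
  by_cases hji : (j : ℕ) ≤ i
  · by_cases hin : (i : ℕ) ≤ j + n
    · simp [hji, hin]
    · simp [hji, hin, coeff_eq_zero_of_natDegree_lt (p := g) (n := i - j) (by omega)]
  · simp [hji]

theorem sylvester_apply_natAdd (hf : f.natDegree ≤ m) (i : Fin (m + n)) (j : Fin n) :
    sylvester f g m n i (Fin.natAdd m j) = (f * X ^ (j : ℕ)).coeff i := by
  rw [sylvester, Matrix.of_apply, Fin.addCases_right, coeff_mul_X_pow']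
  by_cases hji : (j : ℕ) ≤ i
  · by_cases hin : (i : ℕ) ≤ j + m
    · simp [hji, hin]
    · simp [hji, hin, coeff_eq_zero_of_natDegree_lt (p := f) (n := i - j) (by omega)]
  · simp [hji]

theorem sum_coeff_mul_pow_eq_eval₂ {S : Type*} [Semiring S] (φ : R →+* S) (ξ : S) {p : R[X]} {N : ℕ}
    (hp : p.natDegree < N) : ∑ i : Fin N, φ (p.coeff i) * ξ ^ (i : ℕ) = p.eval₂ φ ξ := by
  rw [eval₂_eq_sum_range' φ hp, Fin.sum_univ_eq_sum_range (fun i => φ (p.coeff i) * ξ ^ i)]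

theorem sum_sylvester_mul_pow_castAdd {S : Type*} [CommSemiring S] (φ : R →+* S) (ξ : S)
    (hg : g.natDegree ≤ n) (j : Fin m) :
    ∑ i : Fin (m + n), φ (sylvester f g m n i (Fin.castAdd n j)) * ξ ^ (i : ℕ) =
      g.eval₂ φ ξ * ξ ^ (j : ℕ) := by
  simp_rw [sylvester_apply_castAdd hg]
  rw [sum_coeff_mul_pow_eq_eval₂, eval₂_mul, eval₂_X_pow]
  exact (natDegree_mul_le.trans (add_le_add hg (natDegree_X_pow_le _))).trans_lt (by omega)

theorem sum_sylvester_mul_pow_natAdd {S : Type*} [CommSemiring S] (φ : R →+* S) (ξ : S)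
    (hf : f.natDegree ≤ m) (j : Fin n) :
    ∑ i : Fin (m + n), φ (sylvester f g m n i (Fin.natAdd m j)) * ξ ^ (i : ℕ) =
      f.eval₂ φ ξ * ξ ^ (j : ℕ) := by
  simp_rw [sylvester_apply_natAdd hf]
  rw [sum_coeff_mul_pow_eq_eval₂, eval₂_mul, eval₂_X_pow]
  exact (natDegree_mul_le.trans (add_le_add hf (natDegree_X_pow_le _))).trans_lt (by omega)

end Polynomial

namespace PlaceData

variable (pd : PlaceData K ι)

theorem v_natCast_le (i : ι) (m : ℕ) : pd.v i m ≤ (m : ℝ) ^ pd.e i := by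
  rcases (pd.e_nonneg i).eq_or_lt with h | h
  · rw [← h, Real.rpow_zero]
    exact IsNonarchimedean.apply_natCast_le_one (pd.ultra i h.symm)
  · simpa using pd.arch_nat i h 1 m

theorem support_e_finite : (Function.support pd.e).Finite := by
  by_contra h
  simpa [finsum_of_infinite_support h] using pd.e_sum

theorem polyNorm_nonneg (i : ι) (P : K[X]) : 0 ≤ pd.polyNorm i P :=
  ((pd.v i).nonneg _).trans
    (le_sup' (fun m => pd.v i (P.coeff m)) (mem_range.2 P.natDegree.succ_pos))

theorem v_coeff_le_polyNorm (i : ι) (P : K[X]) (m : ℕ) : pd.v i (P.coeff m) ≤ pd.polyNorm i P := by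
  rcases le_or_gt m P.natDegree with h | h
  · exact le_sup' (fun m => pd.v i (P.coeff m)) (mem_range.2 (Nat.lt_succ_of_le h))
  · rw [coeff_eq_zero_of_natDegree_lt h, map_zero]
    exact pd.polyNorm_nonneg i P

theorem polyNorm_pos (i : ι) {P : K[X]} (hP : P ≠ 0) : 0 < pd.polyNorm i P :=
  ((pd.v i).pos (leadingCoeff_ne_zero.2 hP)).trans_le (pd.v_coeff_le_polyNorm i P _)

theorem polyNorm_eq_one_of_v_coeff_eq_one (i : ι) {P : K[X]} (hP : P ≠ 0)
    (h : ∀ m, P.coeff m ≠ 0 → pd.v i (P.coeff m) = 1) : pd.polyNorm i P = 1 := by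
  refine le_antisymm (sup'_le _ _ fun m _ => ?_) ?_
  · by_cases hm : P.coeff m = 0
    · simp [hm]
    · exact (h m hm).le
  · exact (h _ (leadingCoeff_ne_zero.2 hP)).symm.le.trans (pd.v_coeff_le_polyNorm i P _)

theorem hasFiniteMulSupport_polyNorm {P : K[X]} (hP : P ≠ 0) :
    Function.HasFiniteMulSupport fun i => pd.polyNorm i P := by
  refine ((P.support.finite_toSet).biUnion fun m hm =>
    pd.mulSupport_finite _ (mem_support_iff.1 hm)).subset fun i hi => ?_
  by_contra hnot
  simp only [Set.mem_iUnion, Function.mem_mulSupport, not_exists] at hnot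
  exact hi (pd.polyNorm_eq_one_of_v_coeff_eq_one i hP fun m hm =>
    of_not_not (hnot m (mem_support_iff.2 hm)))

/-- `sylvester P Q m n` holds the coefficients of `Q` in its first `m` columns and those of `P`
in its last `n` columns. -/
noncomputable def sylvesterColNorm (i : ι) (P Q : K[X]) (m n : ℕ) : Fin (m + n) → ℝ :=
  Fin.addCases (fun _ => pd.polyNorm i Q) (fun _ => pd.polyNorm i P)

theorem prod_sylvesterColNorm (i : ι) (P Q : K[X]) (m n : ℕ) :
    ∏ j, pd.sylvesterColNorm i P Q m n j = pd.polyNorm i Q ^ m * pd.polyNorm i P ^ n := by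
  simp [sylvesterColNorm, Fin.prod_univ_add]

theorem v_sylvester_le (i : ι) (P Q : K[X]) (m n : ℕ) (k j : Fin (m + n)) :
    pd.v i (sylvester P Q m n k j) ≤ pd.sylvesterColNorm i P Q m n j := by
  induction j using Fin.addCases <;>
    simp only [sylvester, sylvesterColNorm, Matrix.of_apply, Fin.addCases_left,
      Fin.addCases_right] <;>
    split_ifs <;> simp [v_coeff_le_polyNorm, polyNorm_nonneg]

theorem v_resultant_le (i : ι) (P Q : K[X]) :
    pd.v i (resultant P Q) ≤ ((P.natDegree + Q.natDegree).factorial : ℝ) ^ pd.e i *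
      (pd.polyNorm i P ^ Q.natDegree * pd.polyNorm i Q ^ P.natDegree) := by
  have h := (pd.v i).det_le (pd.e_nonneg i) (pd.v_natCast_le i)
    (sylvester P Q P.natDegree Q.natDegree) 1 (pd.sylvesterColNorm i P Q _ _)
    fun k j => by simpa using pd.v_sylvester_le i P Q _ _ k j
  simpa [resultant, prod_sylvesterColNorm, mul_comm] using h

theorem one_le_of_abv_eval₂_le {L : Type*} [Field L] (w : ι) (φ : K →+* L)
    (absL : AbsoluteValue L ℝ) (hcompat : ∀ x : K, absL (φ x) = pd.v w x) (ξ : L)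
    {P : K[X]} (hP : P ≠ 0) (hP0 : P.natDegree = 0) {M : ℝ}
    (hPM : absL (P.eval₂ φ ξ) ≤ M * pd.polyNorm w P) : 1 ≤ M := by
  have hPξ : absL (P.eval₂ φ ξ) = pd.polyNorm w P := by
    rw [eq_C_of_natDegree_eq_zero hP0, eval₂_C, hcompat, polyNorm]
    simp
  rw [hPξ] at hPM
  exact le_of_mul_le_mul_right (by rwa [one_mul]) (pd.polyNorm_pos w hP)

theorem abv_sum_pow_mul_sylvester_le {L : Type*} [Field L] (w : ι) (φ : K →+* L)
    (absL : AbsoluteValue L ℝ) (ξ : L) {P Q : K[X]} {M : ℝ}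
    (hPM : absL (P.eval₂ φ ξ) ≤ M * pd.polyNorm w P)
    (hQM : absL (Q.eval₂ φ ξ) ≤ M * pd.polyNorm w Q) {r : Fin (P.natDegree + Q.natDegree)}
    (hr : ∀ k : Fin (P.natDegree + Q.natDegree), absL ξ ^ (k : ℕ) ≤ absL ξ ^ (r : ℕ))
    (j : Fin (P.natDegree + Q.natDegree)) :
    absL (∑ k : Fin _, ξ ^ (k : ℕ) * φ (sylvester P Q _ _ k j)) ≤
      M * absL ξ ^ (r : ℕ) * pd.sylvesterColNorm w P Q _ _ j := by
  simp_rw [mul_comm (ξ ^ _)]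
  induction j using Fin.addCases with
  | left j =>
    rw [sum_sylvester_mul_pow_castAdd φ ξ le_rfl, map_mul, map_pow, sylvesterColNorm,
      Fin.addCases_left]
    calc absL (Q.eval₂ φ ξ) * absL ξ ^ (j : ℕ) ≤ M * pd.polyNorm w Q * absL ξ ^ (r : ℕ) :=
          mul_le_mul hQM (by simpa using hr (Fin.castAdd _ j)) (by positivity)
            ((absL.nonneg _).trans hQM)
      _ = _ := by ring
  | right j =>
    rw [sum_sylvester_mul_pow_natAdd φ ξ le_rfl, map_mul, map_pow, sylvesterColNorm,
      Fin.addCases_right]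
    calc absL (P.eval₂ φ ξ) * absL ξ ^ (j : ℕ) ≤ M * pd.polyNorm w P * absL ξ ^ (r : ℕ) :=
          mul_le_mul hPM (hr ⟨j, by omega⟩) (by positivity) ((absL.nonneg _).trans hPM)
      _ = _ := by ring

theorem v_resultant_le_of_eval₂_le (w : ι) {L : Type*} [Field L] (φ : K →+* L)
    (absL : AbsoluteValue L ℝ) (hcompat : ∀ x : K, absL (φ x) = pd.v w x) (ξ : L)
    {P Q : K[X]} (hP : P ≠ 0) {M : ℝ} (hPM : absL (P.eval₂ φ ξ) ≤ M * pd.polyNorm w P)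
    (hQM : absL (Q.eval₂ φ ξ) ≤ M * pd.polyNorm w Q) :
    pd.v w (resultant P Q) ≤ ((P.natDegree + Q.natDegree).factorial : ℝ) ^ pd.e w *
      (pd.polyNorm w P ^ Q.natDegree * pd.polyNorm w Q ^ P.natDegree) * M := by
  rcases Nat.eq_zero_or_pos (P.natDegree + Q.natDegree) with hN | hN
  · obtain ⟨hP0, hQ0⟩ : P.natDegree = 0 ∧ Q.natDegree = 0 := by omega
    have hM := pd.one_le_of_abv_eval₂_le w φ absL hcompat ξ hP hP0 hPM
    rw [hP0, hQ0]
    simpa using hM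
  have hnat : ∀ m : ℕ, absL m ≤ (m : ℝ) ^ pd.e w := fun m => by
    rw [← map_natCast φ m, hcompat]
    exact pd.v_natCast_le w m
  -- The row `r` with the largest `|ξ|^r` is replaced by `∑ ξ^k • (row k)`, which multiplies the
  -- determinant by `ξ^r`.
  obtain ⟨r, -, hr⟩ := exists_max_image univ
    (fun k : Fin (P.natDegree + Q.natDegree) => absL ξ ^ (k : ℕ)) ⟨⟨0, hN⟩, mem_univ _⟩
  set A := (sylvester P Q P.natDegree Q.natDegree).map φ
  have hdet : (A.updateRow r (∑ k : Fin _, ξ ^ (k : ℕ) • A k)).det =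
      ξ ^ (r : ℕ) * φ (resultant P Q) := by
    rw [Matrix.det_updateRow_sum, smul_eq_mul, resultant, RingHom.map_det]
    rfl
  have hbound := absL.det_le (pd.e_nonneg w) hnat (A.updateRow r (∑ k : Fin _, ξ ^ (k : ℕ) • A k))
    (fun i => if i = r then M * absL ξ ^ (r : ℕ) else 1) (pd.sylvesterColNorm w P Q _ _)
    fun i j => by
      by_cases hi : i = r
      · subst hi
        simpa [A, Finset.sum_apply] using
          pd.abv_sum_pow_mul_sylvester_le w φ absL ξ hPM hQM (fun k => hr k (mem_univ _)) j
      · simpa [Matrix.updateRow_ne hi, A, hcompat, hi] using pd.v_sylvester_le w P Q _ _ i j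
  rw [hdet, map_mul, map_pow, hcompat, Fintype.card_fin, prod_ite_eq', if_pos (mem_univ _),
    prod_sylvesterColNorm] at hbound
  have hξ : 0 < absL ξ ^ (r : ℕ) := one_pos.trans_le (by simpa using hr ⟨0, hN⟩ (mem_univ _))
  refine le_of_mul_le_mul_left (hbound.trans_eq ?_) hξ
  ring

theorem polyHeight_nonneg (P : K[X]) : 0 ≤ pd.polyHeight P :=
  finprod_nonneg fun i => pd.polyNorm_nonneg i P

theorem hasFiniteMulSupport_polyNorm_pow_mul {P Q : K[X]} (hP : P ≠ 0) (hQ : Q ≠ 0) (a b : ℕ) :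
    Function.HasFiniteMulSupport fun i => pd.polyNorm i P ^ a * pd.polyNorm i Q ^ b :=
  ((pd.hasFiniteMulSupport_polyNorm hP).pow a).mul ((pd.hasFiniteMulSupport_polyNorm hQ).pow b)

theorem finprod_polyNorm_pow_mul {P Q : K[X]} (hP : P ≠ 0) (hQ : Q ≠ 0) (a b : ℕ) :
    ∏ᶠ i, pd.polyNorm i P ^ a * pd.polyNorm i Q ^ b =
      pd.polyHeight P ^ a * pd.polyHeight Q ^ b := by
  rw [finprod_mul_distrib (f := fun i => pd.polyNorm i P ^ a) (g := fun i => pd.polyNorm i Q ^ b)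
    ((pd.hasFiniteMulSupport_polyNorm hP).pow a) ((pd.hasFiniteMulSupport_polyNorm hQ).pow b),
    polyHeight, polyHeight, finprod_pow (pd.hasFiniteMulSupport_polyNorm hP),
    finprod_pow (pd.hasFiniteMulSupport_polyNorm hQ)]

theorem one_le_of_v_le {x : K} (hx : x ≠ 0) {C : ℝ} (hC : 0 < C) {B : ι → ℝ}
    (hB : Function.HasFiniteMulSupport B) (w : ι) {c : ℝ}
    (hw : pd.v w x ≤ C ^ pd.e w * B w * c) (hv : ∀ i ≠ w, pd.v i x ≤ C ^ pd.e i * B i) :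
    1 ≤ C * (∏ᶠ i, B i) * c := by
  classical
  set S : Finset ι :=
    insert w ((pd.mulSupport_finite x hx).union (pd.support_e_finite.union hB)).toFinset
  have hxS : ∏ᶠ i, pd.v i x = ∏ i ∈ S, pd.v i x :=
    finprod_eq_prod_of_mulSupport_subset _ fun i hi => by simp [S, hi]
  have hBS : ∏ᶠ i, B i = ∏ i ∈ S, B i :=
    finprod_eq_prod_of_mulSupport_subset _ fun i hi => by simp [S, hi]
  have heS : ∑ i ∈ S, pd.e i = 1 :=
    pd.e_sum ▸ (finsum_eq_sum_of_support_subset _ fun i hi => by simp [S, hi]).symm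
  calc (1 : ℝ) = ∏ i ∈ S, pd.v i x := hxS ▸ (pd.product_formula x hx).symm
    _ ≤ ∏ i ∈ S, C ^ pd.e i * B i * (if i = w then c else 1) :=
        prod_le_prod (fun i _ => (pd.v i).nonneg x) fun i _ => by
          by_cases hi : i = w
          · subst hi
            simpa using hw
          · simpa [hi] using hv i hi
    _ = C * (∏ᶠ i, B i) * c := by
        rw [prod_mul_distrib, prod_mul_distrib, ← Real.rpow_sum_of_pos hC, heS, Real.rpow_one,
          prod_ite_eq', if_pos (mem_insert_self _ _), hBS]

end PlaceData

/-- Brownawell's resultant inequality.  Let `K` be a number field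
(axiomatized by `PlaceData`), `w` a place of `K`, `K_w` the completion at `w`
(axiomatized by a field `L` with an absolute value `absL` extending `|·|_w`), and
`ξ ∈ K_w`.  If `P, Q ∈ K[T]` are relatively prime nonzero polynomials of degree at
most `n`, then `1 ≤ (2n)! · max{|P(ξ)|_w/‖P‖_w, |Q(ξ)|_w/‖Q‖_w} · H(P)^{deg Q} · H(Q)^{deg P}`. -/
theorem stmt4 (pd : PlaceData K ι) (w : ι)
    {L : Type*} [Field L] (φ : K →+* L) (absL : AbsoluteValue L ℝ)
    (hcompat : ∀ x : K, absL (φ x) = pd.v w x) (ξ : L)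
    (n : ℕ) (P Q : K[X]) (hP : P ≠ 0) (hQ : Q ≠ 0) (hcop : IsCoprime P Q)
    (hPdeg : P.natDegree ≤ n) (hQdeg : Q.natDegree ≤ n) :
    1 ≤ ((2 * n).factorial : ℝ) *
        max (absL (Polynomial.eval₂ φ ξ P) / pd.polyNorm w P)
            (absL (Polynomial.eval₂ φ ξ Q) / pd.polyNorm w Q) *
        pd.polyHeight P ^ Q.natDegree * pd.polyHeight Q ^ P.natDegree := by
  set M := max (absL (eval₂ φ ξ P) / pd.polyNorm w P) (absL (eval₂ φ ξ Q) / pd.polyNorm w Q)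
  have hPw := pd.polyNorm_pos w hP
  have hPM : absL (eval₂ φ ξ P) ≤ M * pd.polyNorm w P := (div_le_iff₀ hPw).1 (le_max_left _ _)
  have hQM : absL (eval₂ φ ξ Q) ≤ M * pd.polyNorm w Q :=
    (div_le_iff₀ (pd.polyNorm_pos w hQ)).1 (le_max_right _ _)
  have key := pd.one_le_of_v_le (resultant_ne_zero P Q hcop)
    (Nat.cast_pos.2 (P.natDegree + Q.natDegree).factorial_pos)
    (pd.hasFiniteMulSupport_polyNorm_pow_mul hP hQ Q.natDegree P.natDegree) w
    (pd.v_resultant_le_of_eval₂_le w φ absL hcompat ξ hP hPM hQM)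
    fun i _ => pd.v_resultant_le i P Q
  rw [pd.finprod_polyNorm_pow_mul hP hQ] at key
  have hM : 0 ≤ M := le_max_of_le_left (div_nonneg (absL.nonneg _) hPw.le)
  have hHP := pd.polyHeight_nonneg P
  have hHQ := pd.polyHeight_nonneg Q
  calc (1 : ℝ) ≤ (P.natDegree + Q.natDegree).factorial *
        (pd.polyHeight P ^ Q.natDegree * pd.polyHeight Q ^ P.natDegree) * M := key
    _ ≤ (2 * n).factorial *
        (pd.polyHeight P ^ Q.natDegree * pd.polyHeight Q ^ P.natDegree) * M := by
        gcongr
        omega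
    _ = _ := by ring
end

section
/- Let t ≥ 1 be an integer and κ > t^{−1}(t+1)^{1+1/t} a real number, and let n ≥ 1. Setting b = (t+1)n, a_ℓ = ⌊b^{ℓ/t}⌋, and ξ_j = \sum_{i=0}^∞ 2^{−a_{j+ti}} for j = 1, …, t, there exists H_0 ≥ 1 such that for every H ≥ H_0 and every choice of complex algebraic numbers α_1, …, α_t of degree ≤ n over Q and height ≤ H, one has max_{1≤j≤t} |ξ_j − α_j| ≥ H^{−κ n^{1/t}}. -/
/-!
Write `ℓ = j + t m` with `1 ≤ j ≤ t`. Truncating `ξ_j` after its term `2^{-a_ℓ}` leaves a rational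
`r` with denominator `2^{a_ℓ}` and a tail `T = ξ_{ℓ+t}` lying between `2^{-a_{ℓ+t}}` and
`2^{1-a_{ℓ+t}}`. If `α_j = r`, then `|ξ_j - α_j| = T`. Otherwise Liouville's inequality gives
`|α_j - r| ≥ 2^{-n a_ℓ} / (c_n H)`, which swamps `T` once `a_{ℓ+t} ≥ n a_ℓ + log₂ H + O(1)`.
Since `b a_ℓ ≤ a_{ℓ+t} ≤ b (a_ℓ + 1)` and `a_{ℓ+1} ≤ b^{1/t} (a_ℓ + 1)`, the least `ℓ` with
`t n a_ℓ ≥ log₂ H + O(1)` satisfies this and also `a_{ℓ+t} ≤ κ n^{1/t} log₂ H` for large `H`: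
the hypothesis on `κ` is exactly what makes these windows cover a half-line.
-/

open Polynomial

/-- the lacunary exponent sequence `a_ℓ = ⌊b^{ℓ/t}⌋` with `b = (t+1)n`. -/
noncomputable def expSeq (t n : ℕ) (ℓ : ℕ) : ℕ :=
  Nat.floor ((((t + 1) * n : ℕ) : ℝ) ^ ((ℓ : ℝ) / (t : ℝ)))

/-- the Liouville-type number `ξ_j = ∑_{i=0}^∞ 2^{−a_{j+ti}}`. -/
noncomputable def liouvilleXi (t n j : ℕ) : ℝ :=
  ∑' i : ℕ, (2 : ℝ) ^ (-(expSeq t n (j + t * i) : ℤ))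

open Filter

section ExpSeq

variable {t n : ℕ}

@[simp]
lemma expSeq_zero : expSeq t n 0 = 1 := by
  simp [expSeq]

lemma one_le_expSeq (hn : 1 ≤ n) (ℓ : ℕ) : 1 ≤ expSeq t n ℓ :=
  Nat.le_floor <| by
    rw [Nat.cast_one]
    exact Real.one_le_rpow (by norm_cast; nlinarith) (by positivity)

lemma expSeq_monotone (hn : 1 ≤ n) : Monotone (expSeq t n) := fun ℓ ℓ' h ↦
  Nat.floor_le_floor <| Real.rpow_le_rpow_of_exponent_le (by norm_cast; nlinarith) <|
    div_le_div_of_nonneg_right (by exact_mod_cast h) (Nat.cast_nonneg t)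

lemma rpow_add_div_self {b : ℝ} (hb : 0 ≤ b) (ht : 1 ≤ t) (ℓ : ℕ) :
    b ^ (((ℓ + t : ℕ) : ℝ) / t) = b * b ^ ((ℓ : ℝ) / t) := by
  have ht' : (t : ℝ) ≠ 0 := by positivity
  rw [Nat.cast_add, add_div, div_self ht', Real.rpow_add_one' hb (by positivity), mul_comm]

lemma mul_expSeq_le (ht : 1 ≤ t) (ℓ : ℕ) :
    (t + 1) * n * expSeq t n ℓ ≤ expSeq t n (ℓ + t) := by
  refine Nat.le_floor ?_
  rw [rpow_add_div_self (Nat.cast_nonneg _) ht, Nat.cast_mul]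
  exact mul_le_mul_of_nonneg_left (Nat.floor_le (by positivity)) (Nat.cast_nonneg _)

lemma expSeq_add_le (ht : 1 ≤ t) (ℓ : ℕ) :
    expSeq t n (ℓ + t) ≤ (t + 1) * n * (expSeq t n ℓ + 1) := by
  have h : (((t + 1) * n : ℕ) : ℝ) ^ ((ℓ : ℝ) / t) ≤ expSeq t n ℓ + 1 :=
    (Nat.lt_floor_add_one _).le
  refine Nat.floor_le_of_le ?_
  rw [rpow_add_div_self (Nat.cast_nonneg _) ht]
  push_cast at h ⊢
  exact mul_le_mul_of_nonneg_left h (by positivity)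

lemma expSeq_succ_le (hn : 1 ≤ n) (ℓ : ℕ) :
    (expSeq t n (ℓ + 1) : ℝ) ≤
      (((t + 1) * n : ℕ) : ℝ) ^ (t : ℝ)⁻¹ * (expSeq t n ℓ + 1) := by
  have hb : (0 : ℝ) < ((t + 1) * n : ℕ) := by norm_cast; nlinarith
  calc (expSeq t n (ℓ + 1) : ℝ)
      ≤ (((t + 1) * n : ℕ) : ℝ) ^ (((ℓ + 1 : ℕ) : ℝ) / t) := Nat.floor_le (by positivity)
    _ = (((t + 1) * n : ℕ) : ℝ) ^ (t : ℝ)⁻¹ * (((t + 1) * n : ℕ) : ℝ) ^ ((ℓ : ℝ) / t) := by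
      rw [← Real.rpow_add hb]; push_cast; ring_nf
    _ ≤ _ := mul_le_mul_of_nonneg_left (Nat.lt_floor_add_one _).le (by positivity)

lemma expSeq_add_le_expSeq_add_mul (ht : 1 ≤ t) (hn : 1 ≤ n) (k i : ℕ) :
    expSeq t n k + i ≤ expSeq t n (k + t * i) := by
  induction i with
  | zero => simp
  | succ i ih =>
    have h₁ := mul_expSeq_le (n := n) ht (k + t * i)
    have h₂ := one_le_expSeq (t := t) hn (k + t * i)
    rw [show k + t * (i + 1) = k + t * i + t by ring]
    have h₃ : 2 ≤ (t + 1) * n := by nlinarith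
    nlinarith

end ExpSeq

section LiouvilleXi

variable {t n : ℕ}

lemma zpow_neg_expSeq_le (ht : 1 ≤ t) (hn : 1 ≤ n) (k i : ℕ) :
    (2 : ℝ) ^ (-(expSeq t n (k + t * i) : ℤ)) ≤ 2 ^ (-(expSeq t n k : ℤ)) * 2⁻¹ ^ i := by
  calc (2 : ℝ) ^ (-(expSeq t n (k + t * i) : ℤ))
      ≤ 2 ^ (-((expSeq t n k + i : ℕ) : ℤ)) :=
        zpow_le_zpow_right₀ one_le_two <| neg_le_neg <|
          Int.ofNat_le.mpr (expSeq_add_le_expSeq_add_mul ht hn k i)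
    _ = 2 ^ (-(expSeq t n k : ℤ)) * 2⁻¹ ^ i := by
      rw [Nat.cast_add, neg_add, zpow_add₀ two_ne_zero, zpow_neg (a := (2 : ℝ)) (i : ℤ),
        zpow_natCast, inv_pow]

lemma summable_zpow_neg_expSeq (ht : 1 ≤ t) (hn : 1 ≤ n) (k : ℕ) :
    Summable fun i ↦ (2 : ℝ) ^ (-(expSeq t n (k + t * i) : ℤ)) :=
  .of_nonneg_of_le (fun _ ↦ by positivity) (zpow_neg_expSeq_le ht hn k)
    ((summable_geometric_of_lt_one (by norm_num) (by norm_num)).mul_left _)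

lemma zpow_neg_expSeq_le_liouvilleXi (ht : 1 ≤ t) (hn : 1 ≤ n) (k : ℕ) :
    (2 : ℝ) ^ (-(expSeq t n k : ℤ)) ≤ liouvilleXi t n k := by
  simpa [liouvilleXi] using (summable_zpow_neg_expSeq ht hn k).le_tsum 0 fun _ _ ↦ by positivity

lemma liouvilleXi_le (ht : 1 ≤ t) (hn : 1 ≤ n) (k : ℕ) :
    liouvilleXi t n k ≤ 2 * 2 ^ (-(expSeq t n k : ℤ)) := by
  calc liouvilleXi t n k ≤ ∑' i : ℕ, 2 ^ (-(expSeq t n k : ℤ)) * (2 : ℝ)⁻¹ ^ i :=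
        (summable_zpow_neg_expSeq ht hn k).tsum_le_tsum (zpow_neg_expSeq_le ht hn k)
          ((summable_geometric_of_lt_one (by norm_num) (by norm_num)).mul_left _)
    _ = 2 * 2 ^ (-(expSeq t n k : ℤ)) := by rw [tsum_mul_left, tsum_geometric_inv_two, mul_comm]

lemma liouvilleXi_eq_sum_add (ht : 1 ≤ t) (hn : 1 ≤ n) (j m : ℕ) :
    liouvilleXi t n j =
      ∑ i ∈ Finset.range m, (2 : ℝ) ^ (-(expSeq t n (j + t * i) : ℤ)) +
        liouvilleXi t n (j + t * m) := by
  rw [liouvilleXi, ← (summable_zpow_neg_expSeq ht hn j).sum_add_tsum_nat_add m, liouvilleXi]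
  congr 3 with i
  ring_nf

lemma liouvilleXi_le_one (ht : 1 ≤ t) (hn : 1 ≤ n) (k : ℕ) : liouvilleXi t n k ≤ 1 := by
  have h : (2 : ℝ) ^ (-(expSeq t n k : ℤ)) ≤ 2 ^ (-1 : ℤ) :=
    zpow_le_zpow_right₀ one_le_two (by have := one_le_expSeq (t := t) hn k; omega)
  rw [zpow_neg_one] at h
  linarith [liouvilleXi_le ht hn k]

lemma exists_sum_zpow_neg_eq_div {ι : Type*} (s : Finset ι) (b : ι → ℕ) {M : ℕ}
    (hb : ∀ i ∈ s, b i ≤ M) :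
    ∃ P : ℕ, ∑ i ∈ s, (2 : ℝ) ^ (-(b i : ℤ)) = P / 2 ^ M := by
  refine ⟨∑ i ∈ s, 2 ^ (M - b i), ?_⟩
  rw [Nat.cast_sum, Finset.sum_div]
  refine Finset.sum_congr rfl fun i hi ↦ ?_
  rw [Nat.cast_pow, Nat.cast_ofNat, pow_sub₀ _ two_ne_zero (hb i hi), zpow_neg, zpow_natCast]
  field_simp

lemma exists_liouvilleXi_eq_div_add (ht : 1 ≤ t) (hn : 1 ≤ n) (j m : ℕ) :
    ∃ P : ℕ, liouvilleXi t n j =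
      P / 2 ^ expSeq t n (j + t * m) + liouvilleXi t n (j + t * m + t) := by
  obtain ⟨P, hP⟩ := exists_sum_zpow_neg_eq_div (Finset.range (m + 1))
    (fun i ↦ expSeq t n (j + t * i)) (M := expSeq t n (j + t * m)) fun i hi ↦
      expSeq_monotone hn <| Nat.add_le_add_left
        (Nat.mul_le_mul_left t (Nat.lt_succ_iff.mp (Finset.mem_range.mp hi))) j
  refine ⟨P, ?_⟩
  rw [liouvilleXi_eq_sum_add ht hn j (m + 1), hP, mul_add_one, ← add_assoc]

end LiouvilleXi

lemma Irreducible.eq_ratCast_of_aeval_eq_zero {K : Type*} [Field K] [CharZero K] {p : ℤ[X]}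
    (hp : Irreducible p) {q : ℚ} (hq : aeval (q : K) p = 0) {α : K} (hα : aeval α p = 0) :
    α = q := by
  have hqℚ : aeval q p = 0 := by
    rw [← (Rat.cast_injective (α := K)).eq_iff, Rat.cast_zero, ← hq]
    exact (aeval_algebraMap_apply K q p).symm
  have hdeg : p.natDegree ≠ 0 := by
    intro h
    obtain ⟨c, rfl⟩ := natDegree_eq_zero.mp h
    exact hp.ne_zero (by simpa using hqℚ)
  have hpℚ : Irreducible (p.map (Int.castRingHom ℚ)) :=
    (IsPrimitive.Int.irreducible_iff_irreducible_map_cast (hp.isPrimitive hdeg)).mp hp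
  have hroot : (p.map (Int.castRingHom ℚ)).IsRoot q := by
    simpa [aeval_def, eval₂_eq_eval_map] using hqℚ
  have hmap : (p.map (Int.castRingHom ℚ)).map (algebraMap ℚ K) = p.map (algebraMap ℤ K) := by
    rw [Polynomial.map_map]
    congr 1
    exact RingHom.ext_int _ _
  have hdeg₁ : (p.map (algebraMap ℤ K)).natDegree = 1 := by
    rw [← hmap, natDegree_map]
    exact natDegree_eq_of_degree_eq_some (degree_eq_one_of_irreducible_of_root hpℚ hroot)
  refine subsingleton_isRoot_of_natDegree_eq_one hdeg₁ ?_ ?_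
  · rwa [Set.mem_ofPred_eq, IsRoot.def, eval_map_algebraMap]
  · rwa [Set.mem_ofPred_eq, IsRoot.def, eval_map_algebraMap]

lemma norm_pow_sub_pow_le {𝕜 : Type*} [NormedField 𝕜] {x y : 𝕜} {R : ℝ} (hx : ‖x‖ ≤ R)
    (hy : ‖y‖ ≤ R) (k : ℕ) : ‖x ^ k - y ^ k‖ ≤ k * R ^ (k - 1) * ‖x - y‖ := by
  have hR : 0 ≤ R := (norm_nonneg x).trans hx
  rw [← geom_sum₂_mul x y k, norm_mul]
  refine mul_le_mul_of_nonneg_right ?_ (norm_nonneg _)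
  calc ‖∑ i ∈ Finset.range k, x ^ i * y ^ (k - 1 - i)‖
      ≤ ∑ i ∈ Finset.range k, ‖x ^ i * y ^ (k - 1 - i)‖ := norm_sum_le _ _
    _ ≤ ∑ i ∈ Finset.range k, R ^ (k - 1) := Finset.sum_le_sum fun i hi ↦ by
      rw [norm_mul, norm_pow, norm_pow]
      calc ‖x‖ ^ i * ‖y‖ ^ (k - 1 - i) ≤ R ^ i * R ^ (k - 1 - i) := by gcongr
        _ = R ^ (k - 1) := by
          rw [← pow_add]
          congr 1
          have := Finset.mem_range.mp hi
          omega
    _ = k * R ^ (k - 1) := by rw [Finset.sum_const, Finset.card_range, nsmul_eq_mul]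

lemma norm_aeval_sub_aeval_le {p : ℤ[X]} {n : ℕ} (hdeg : p.natDegree ≤ n) {H : ℝ}
    (hH : ∀ k, |(p.coeff k : ℝ)| ≤ H) {R : ℝ} (hR : 1 ≤ R) {x y : ℂ} (hx : ‖x‖ ≤ R)
    (hy : ‖y‖ ≤ R) : ‖aeval x p - aeval y p‖ ≤ H * ((n + 1) ^ 2 * R ^ n) * ‖x - y‖ := by
  have hlt : p.natDegree < n + 1 := Nat.lt_succ_of_le hdeg
  have hterm : ∀ k ∈ Finset.range (n + 1),
      ‖p.coeff k • x ^ k - p.coeff k • y ^ k‖ ≤ H * ((n + 1) * R ^ n) * ‖x - y‖ := by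
    intro k hk
    have hk : k ≤ n := Nat.lt_succ_iff.mp (Finset.mem_range.mp hk)
    rw [← smul_sub, zsmul_eq_mul, norm_mul, ← Complex.ofReal_intCast, Complex.norm_real,
      Real.norm_eq_abs, mul_assoc]
    refine mul_le_mul (hH k) ((norm_pow_sub_pow_le hx hy k).trans ?_) (norm_nonneg _)
      ((abs_nonneg _).trans (hH k))
    gcongr
    · exact_mod_cast hk.trans (Nat.le_succ n)
    · omega
  calc ‖aeval x p - aeval y p‖
      = ‖∑ k ∈ Finset.range (n + 1), (p.coeff k • x ^ k - p.coeff k • y ^ k)‖ := by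
        rw [aeval_eq_sum_range' hlt, aeval_eq_sum_range' hlt, Finset.sum_sub_distrib]
    _ ≤ ∑ k ∈ Finset.range (n + 1), H * ((n + 1) * R ^ n) * ‖x - y‖ :=
        (norm_sum_le _ _).trans (Finset.sum_le_sum hterm)
    _ = H * ((n + 1) ^ 2 * R ^ n) * ‖x - y‖ := by
        rw [Finset.sum_const, Finset.card_range, nsmul_eq_mul]; push_cast; ring

lemma liouville_le_norm_sub {p : ℤ[X]} (hp : Irreducible p) {n : ℕ} (hdeg : p.natDegree ≤ n)
    {H : ℝ} (hH₁ : 1 ≤ H) (hH : ∀ k, |(p.coeff k : ℝ)| ≤ H) {α : ℂ} (hα : aeval α p = 0)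
    {r : ℝ} {P : ℤ} {N : ℕ} (hN : 0 < N) (hrPN : r = P / N) (hr : |r| ≤ 1) (hne : α ≠ r) :
    ((N : ℝ) ^ n)⁻¹ / (H * ((n + 1) ^ 2 * 2 ^ n)) ≤ ‖α - r‖ := by
  have hcast : aeval (r : ℂ) p = (aeval r p : ℂ) := aeval_algebraMap_apply ℂ r p
  have hpr : aeval r p ≠ 0 := by
    intro h
    have hrℚ : ((P / N : ℚ) : ℂ) = r := by rw [hrPN]; push_cast; rfl
    have hq : aeval ((P / N : ℚ) : ℂ) p = 0 := by rw [hrℚ, hcast, h, Complex.ofReal_zero]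
    exact hne ((hp.eq_ratCast_of_aeval_eq_zero hq hα).trans hrℚ)
  have hN₁ : (1 : ℝ) ≤ N := by exact_mod_cast hN
  have hliouville : ((N : ℝ) ^ n)⁻¹ ≤ |aeval r p| := by
    have h := one_le_pow_mul_abs_eval_div (K := ℝ) (f := p) (a := P) (Int.natCast_pos.mpr hN)
      (by rwa [Int.cast_natCast, eval_map_algebraMap, ← hrPN])
    rw [Int.cast_natCast, eval_map_algebraMap, ← hrPN] at h
    rw [inv_le_iff_one_le_mul₀ (by positivity), mul_comm]
    exact h.trans (mul_le_mul_of_nonneg_right (pow_le_pow_right₀ hN₁ hdeg) (abs_nonneg _))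
  have hC : 1 ≤ H * ((n + 1) ^ 2 * 2 ^ n) :=
    one_le_mul_of_one_le_of_one_le hH₁ (one_le_mul_of_one_le_of_one_le
      (one_le_pow₀ (by linarith [(n.cast_nonneg : (0 : ℝ) ≤ n)])) (one_le_pow₀ one_le_two))
  rcases le_or_gt ‖α - r‖ 1 with hclose | hfar
  · have hr₁ : ‖(r : ℂ)‖ ≤ 1 := by rwa [Complex.norm_real, Real.norm_eq_abs]
    have hα₂ : ‖α‖ ≤ 2 := by
      calc ‖α‖ = ‖(α - r) + r‖ := by rw [sub_add_cancel]
        _ ≤ ‖α - r‖ + ‖(r : ℂ)‖ := norm_add_le _ _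
        _ ≤ 2 := by linarith
    have hlip := norm_aeval_sub_aeval_le (x := (r : ℂ)) hdeg hH one_le_two (by linarith) hα₂
    rw [hα, sub_zero, hcast, Complex.norm_real, Real.norm_eq_abs, norm_sub_rev] at hlip
    rw [div_le_iff₀ (by positivity), mul_comm]
    exact hliouville.trans hlip
  · refine le_trans ?_ hfar.le
    exact (div_le_self (by positivity) hC).trans (inv_le_one_of_one_le₀ (one_le_pow₀ hN₁))

lemma exists_pos_mem_Icc_of_succ_le {a : ℕ → ℝ} {β L : ℝ} (hβ : 0 ≤ β)
    (hstep : ∀ ℓ, a (ℓ + 1) ≤ β * (a ℓ + 1)) (h₀ : a 0 < L) (hL : ∃ ℓ, L ≤ a ℓ) :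
    ∃ ℓ, 0 < ℓ ∧ a ℓ ∈ Set.Icc L (β * (L + 1)) := by
  classical
  have hℓ : 0 < Nat.find hL := Nat.pos_of_ne_zero fun h ↦ h₀.not_ge (h ▸ Nat.find_spec hL)
  refine ⟨Nat.find hL, hℓ, Nat.find_spec hL, ?_⟩
  have hprev : a (Nat.find hL - 1) < L := not_le.mp (Nat.find_min hL (Nat.sub_lt hℓ one_pos))
  calc a (Nat.find hL) = a (Nat.find hL - 1 + 1) := by rw [Nat.sub_add_cancel hℓ]
    _ ≤ β * (a (Nat.find hL - 1) + 1) := hstep _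
    _ ≤ β * (L + 1) := by gcongr

lemma eventually_exists_expSeq_window {t n : ℕ} (ht : 1 ≤ t) (hn : 1 ≤ n) (D : ℝ) {c : ℝ}
    (hc : (((t + 1) * n : ℕ) : ℝ) ^ (t : ℝ)⁻¹ * (t + 1) / t < c) :
    ∀ᶠ A in atTop, ∃ ℓ, 0 < ℓ ∧ n * expSeq t n ℓ + A + D ≤ (expSeq t n (ℓ + t) : ℝ) ∧
      (expSeq t n (ℓ + t) : ℝ) ≤ c * A := by
  set B : ℝ := (((t + 1) * n : ℕ) : ℝ) with hB
  set β := B ^ (t : ℝ)⁻¹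
  have hβ : 0 ≤ β := by positivity
  have htn : (0 : ℝ) < t * n := by norm_cast; positivity
  set K := β * (t + 1) / t * D + B * β + B
  filter_upwards [eventually_gt_atTop (t * n - D),
    eventually_ge_atTop (K / (c - β * (t + 1) / t))] with A hA₁ hA₂
  set L := (A + D) / (t * n)
  have hL : t * n * L = A + D := mul_div_cancel₀ _ htn.ne'
  have hL₁ : 1 < L := by rw [lt_div_iff₀ htn]; linarith
  obtain ⟨ℓ, hℓ, hLℓ, hℓL⟩ := exists_pos_mem_Icc_of_succ_le (a := fun ℓ ↦ (expSeq t n ℓ : ℝ))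
    hβ (expSeq_succ_le hn) (by simpa using hL₁)
    ⟨t * ⌈L⌉₊, by
      have h := expSeq_add_le_expSeq_add_mul (n := n) ht hn 0 ⌈L⌉₊
      simp only [zero_add, expSeq_zero] at h
      exact (Nat.le_ceil L).trans (by exact_mod_cast (Nat.le_add_left _ _).trans h)⟩
  have hlow : B * expSeq t n ℓ ≤ expSeq t n (ℓ + t) := by
    rw [hB]; exact_mod_cast mul_expSeq_le ht ℓ
  have hup : (expSeq t n (ℓ + t) : ℝ) ≤ B * (expSeq t n ℓ + 1) := by
    rw [hB]; exact_mod_cast expSeq_add_le ht ℓ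
  have hBtn : B = (t + 1) * n := by rw [hB]; push_cast; ring
  refine ⟨ℓ, hℓ, ?_, ?_⟩
  · have := mul_le_mul_of_nonneg_left hLℓ htn.le
    rw [hBtn] at hlow
    linear_combination hlow + this - hL
  · have hK : K ≤ (c - β * (t + 1) / t) * A := (div_le_iff₀' (by linarith)).mp hA₂
    have hBL : B * (L + 1) = (t + 1) / t * (A + D) + B := by
      rw [← hL, hBtn]; field_simp
    calc (expSeq t n (ℓ + t) : ℝ) ≤ B * (expSeq t n ℓ + 1) := hup
      _ ≤ B * (β * (L + 1) + 1) := by gcongr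
      _ = β * (t + 1) / t * A + K := by rw [mul_add, mul_left_comm, hBL]; ring
      _ ≤ c * A := by linarith

lemma rpow_neg_le_norm_liouvilleXi_sub {t n : ℕ} (ht : 1 ≤ t) (hn : 1 ≤ n) {p : ℤ[X]}
    (hp : Irreducible p) (hdeg : p.natDegree ≤ n) {H : ℝ} (hH₁ : 1 ≤ H)
    (hH : ∀ k, |(p.coeff k : ℝ)| ≤ H) {α : ℂ} (hα : aeval α p = 0) (j m : ℕ) {E : ℝ}
    (hgap : n * expSeq t n (j + t * m) + Real.logb 2 (H * ((n + 1) ^ 2 * 2 ^ n)) + 2 ≤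
      (expSeq t n (j + t * m + t) : ℝ))
    (hE : (expSeq t n (j + t * m + t) : ℝ) ≤ E) :
    (2 : ℝ) ^ (-E) ≤ ‖(liouvilleXi t n j : ℂ) - α‖ := by
  set a := expSeq t n (j + t * m)
  set T := liouvilleXi t n (j + t * m + t)
  obtain ⟨P, hξ⟩ := exists_liouvilleXi_eq_div_add ht hn j m
  set r : ℝ := P / 2 ^ a
  have hT₁ : (2 : ℝ) ^ (-(expSeq t n (j + t * m + t) : ℝ)) ≤ T := by
    rw [Real.rpow_neg_natCast]; exact zpow_neg_expSeq_le_liouvilleXi ht hn _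
  have hT₂ : T ≤ 2 * (2 : ℝ) ^ (-(expSeq t n (j + t * m + t) : ℝ)) := by
    rw [Real.rpow_neg_natCast]; exact liouvilleXi_le ht hn _
  have hξr : ‖(liouvilleXi t n j : ℂ) - r‖ = T := by
    rw [hξ, Complex.ofReal_add, add_sub_cancel_left, Complex.norm_real, Real.norm_eq_abs,
      abs_of_nonneg ((by positivity : (0 : ℝ) ≤ _).trans hT₁)]
  by_cases hαr : α = r
  · rw [hαr, hξr]
    exact (Real.rpow_le_rpow_of_exponent_le one_le_two (by linarith)).trans hT₁
  have hr : |r| ≤ 1 := by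
    rw [abs_of_nonneg (by positivity)]
    linarith [liouvilleXi_le_one ht hn j, (by positivity : (0 : ℝ) ≤ _).trans hT₁]
  set X := n * a + Real.logb 2 (H * ((n + 1) ^ 2 * 2 ^ n))
  have hliouville : (2 : ℝ) ^ (-X) ≤ ‖α - r‖ := by
    have h := liouville_le_norm_sub hp hdeg hH₁ hH hα (P := P) (N := 2 ^ a)
      (by positivity) (by push_cast; rfl) hr hαr
    convert h using 1
    rw [Real.rpow_neg zero_le_two, Real.rpow_add two_pos,
      Real.rpow_logb two_pos (by norm_num) (by positivity), ← Nat.cast_mul, Real.rpow_natCast,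
      mul_inv, div_eq_mul_inv, Nat.cast_pow, Nat.cast_ofNat, ← pow_mul, mul_comm n]
  have hY : (2 : ℝ) ^ (-X) = 2 * 2 ^ (-(X + 1)) := by
    rw [show -X = 1 + -(X + 1) by ring, Real.rpow_add two_pos, Real.rpow_one]
  have hT₃ : T ≤ 2 ^ (-(X + 1)) :=
    calc T ≤ 2 * (2 : ℝ) ^ (-(expSeq t n (j + t * m + t) : ℝ)) := hT₂
      _ = 2 ^ (1 + -(expSeq t n (j + t * m + t) : ℝ)) := by
        rw [Real.rpow_add two_pos, Real.rpow_one]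
      _ ≤ 2 ^ (-(X + 1)) := Real.rpow_le_rpow_of_exponent_le one_le_two (by linarith)
  have hE' : (2 : ℝ) ^ (-E) ≤ 2 ^ (-(X + 1)) :=
    Real.rpow_le_rpow_of_exponent_le one_le_two (by linarith)
  have htri := norm_sub_le_norm_sub_add_norm_sub α (liouvilleXi t n j : ℂ) r
  rw [norm_sub_rev α (liouvilleXi t n j : ℂ), hξr] at htri
  linarith

lemma rpow_inv_mul_succ_div_lt {t n : ℕ} (ht : 1 ≤ t) (hn : 1 ≤ n) {κ : ℝ}
    (hκ : κ > (t : ℝ)⁻¹ * ((t : ℝ) + 1) ^ (1 + 1 / (t : ℝ))) :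
    (((t + 1) * n : ℕ) : ℝ) ^ (t : ℝ)⁻¹ * (t + 1) / t < κ * (n : ℝ) ^ (t : ℝ)⁻¹ := by
  have ht' : (0 : ℝ) < t := by exact_mod_cast ht
  calc (((t + 1) * n : ℕ) : ℝ) ^ (t : ℝ)⁻¹ * (t + 1) / t
      = (t : ℝ)⁻¹ * ((t : ℝ) + 1) ^ (1 + 1 / (t : ℝ)) * (n : ℝ) ^ (t : ℝ)⁻¹ := by
        push_cast
        rw [Real.mul_rpow (by positivity) (by positivity), Real.rpow_add (by positivity),
          Real.rpow_one, one_div]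
        field_simp
    _ < κ * (n : ℝ) ^ (t : ℝ)⁻¹ := mul_lt_mul_of_pos_right hκ (by positivity)

/-- Proposition 10.2 for the archimedean place of `ℚ`.  Let
`t ≥ 1`, `κ > t⁻¹(t+1)^{1+1/t}`, `n ≥ 1`.  With `b = (t+1)n`, `a_ℓ = ⌊b^{ℓ/t}⌋` and
`ξ_j = ∑_i 2^{−a_{j+ti}}` for `j = 1, …, t`, there exists `H₀ ≥ 1` such that for all
`H ≥ H₀` and all complex algebraic numbers `α_1, …, α_t` of degree `≤ n` over `ℚ` and
height `≤ H` (the height being the max absolute value of the coefficients of the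
minimal polynomial over `ℤ`), one has `max_{1≤j≤t} |ξ_j − α_j| ≥ H^{−κ n^{1/t}}`. -/
theorem stmt13 (t n : ℕ) (ht : 1 ≤ t) (hn : 1 ≤ n) (κ : ℝ)
    (hκ : κ > ((t : ℝ))⁻¹ * ((t : ℝ) + 1) ^ (1 + 1 / (t : ℝ))) :
    ∃ H₀ : ℝ, 1 ≤ H₀ ∧
      ∀ H : ℝ, H₀ ≤ H →
      ∀ α : Fin t → ℂ,
        (∀ j, ∃ p : Polynomial ℤ, p ≠ 0 ∧ Irreducible p ∧ p.natDegree ≤ n ∧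
          (∀ k, (|(p.coeff k : ℤ)| : ℝ) ≤ H) ∧ Polynomial.aeval (α j) p = 0) →
        ∃ j : Fin t,
          ‖(liouvilleXi t n ((j : ℕ) + 1) : ℂ) - α j‖ ≥
            H ^ (-(κ * (n : ℝ) ^ ((t : ℝ))⁻¹)) := by
  set c := κ * (n : ℝ) ^ (t : ℝ)⁻¹
  set C : ℝ := (n + 1) ^ 2 * 2 ^ n
  have hwindow := eventually_exists_expSeq_window ht hn (Real.logb 2 C + 2)
    (rpow_inv_mul_succ_div_lt ht hn hκ)
  obtain ⟨H₀, hH₀⟩ := eventually_atTop.mp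
    ((eventually_ge_atTop 1).and ((Real.tendsto_logb_atTop one_lt_two).eventually hwindow))
  refine ⟨max H₀ 1, le_max_right _ _, fun H hH α hα ↦ ?_⟩
  obtain ⟨hH₁, ℓ, hℓ, hgap, hE⟩ := hH₀ H (le_of_max_le_left hH)
  obtain ⟨m, j, hj, rfl⟩ : ∃ m j, j < t ∧ ℓ = j + 1 + t * m :=
    ⟨(ℓ - 1) / t, (ℓ - 1) % t, Nat.mod_lt _ (by omega), by have := Nat.mod_add_div (ℓ - 1) t; omega⟩
  obtain ⟨p, -, hp, hdeg, hH, hroot⟩ := hα ⟨j, hj⟩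
  have hHc : H ^ (-c) = 2 ^ (-(c * Real.logb 2 H)) := by
    rw [← Real.rpow_logb two_pos (by norm_num) (by linarith : 0 < H), ← Real.rpow_mul zero_le_two,
      Real.logb_rpow two_pos (by norm_num)]
    ring_nf
  refine ⟨⟨j, hj⟩, ?_⟩
  rw [ge_iff_le, hHc]
  refine rpow_neg_le_norm_liouvilleXi_sub ht hn hp hdeg hH₁ hH hroot (j + 1) m ?_ hE
  rw [Real.logb_mul (by positivity) (by positivity)]
  linarith
end

section
/- Hankel kernel description under shifted bases: Let Q be a polynomial of degree ≤ n over a field of characteristic zero, ξ an element of the field, z_i = (-1)^i i! Q^{(n-i)}(ξ), and y_i = (-1)^i i! Q^{(n-i)}(0). Then the Hankel matrices M_ℓ = (y_{i+j})_{0≤i≤ℓ, 0≤j≤n-ℓ} and N_ℓ = (z_{i+j})_{0≤i≤ℓ, 0≤j≤n-ℓ} have the same rank, since they represent the same bilinear form B_ℓ(F,G) = g(FG,Q) in the bases {T^i} and {(T-ξ)^i} respectively, where g(P,Q) = \sum_{j=0}^n (-1)^j P^{(j)}(0) Q^{(n-j)}(0). -/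
/-!
Both Hankel matrices are Gram matrices of one bilinear form `(F, G) ↦ g(FG, Q)`: `M` in the
monomial bases `Tⁱ` and `N` in the shifted bases `(T - ξ)ⁱ`. For the entries of `N` one computes
the pairing `g` at `ξ` instead of `0`; this changes nothing, since as a function of the base point
its derivative telescopes to `± P⁽ⁿ⁺¹⁾ Q + P Q⁽ⁿ⁺¹⁾ = 0`. The matrices expressing `(T - ξ)ⁱ` in
the monomial basis are unitriangular, so the two Gram matrices have the same rank.
-/

open Polynomial Finset Matrix

namespace Polynomial

variable {R : Type*} [CommRing R]

lemma natDegree_X_sub_C_pow_le (ξ : R) (i : ℕ) : ((X - C ξ) ^ i).natDegree ≤ i :=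
  (natDegree_pow_le_of_le i (natDegree_X_sub_C_le ξ)).trans_eq (mul_one i)

section CoeffMatrix

variable {ι κ : Type*}

def coeffMatrix (p : ι → R[X]) (m : ℕ) : Matrix ι (Fin m) R :=
  of fun i a => (p i).coeff a

@[simp]
lemma coeffMatrix_apply (p : ι → R[X]) (m : ℕ) (i : ι) (a : Fin m) :
    coeffMatrix p m i a = (p i).coeff a :=
  rfl

lemma eq_sum_fin_coeff_smul_X_pow (p : R[X]) {m : ℕ} (hp : p.natDegree < m) :
    p = ∑ a : Fin m, p.coeff a • X ^ (a : ℕ) := by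
  rw [Fin.sum_univ_eq_sum_range (fun a => p.coeff a • X ^ a)]
  simpa only [smul_eq_C_mul] using p.as_sum_range_C_mul_X_pow' hp

lemma linearMap_mul_eq_coeffMatrix_mul (L : R[X] →ₗ[R] R) (p : ι → R[X]) (q : κ → R[X])
    {m k : ℕ} (hp : ∀ i, (p i).natDegree < m) (hq : ∀ j, (q j).natDegree < k) :
    of (fun i j => L (p i * q j)) =
      coeffMatrix p m * of (fun (a : Fin m) (b : Fin k) => L (X ^ (a : ℕ) * X ^ (b : ℕ))) *
        (coeffMatrix q k)ᵀ := by
  ext i j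
  rw [of_apply]
  conv_lhs =>
    rw [eq_sum_fin_coeff_smul_X_pow (p i) (hp i), eq_sum_fin_coeff_smul_X_pow (q j) (hq j)]
  simp only [sum_mul_sum, smul_mul_smul_comm, map_sum, map_smul, smul_eq_mul, mul_apply,
    transpose_apply, coeffMatrix_apply, of_apply]
  rw [sum_comm]
  simp only [sum_mul]
  refine sum_congr rfl fun b _ => sum_congr rfl fun a _ => by ring

lemma det_coeffMatrix_X_sub_C_pow (m : ℕ) (ξ : R) :
    (coeffMatrix (fun i : Fin m => (X - C ξ) ^ (i : ℕ)) m).det = 1 := by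
  nontriviality R
  have hdeg (i : ℕ) : ((X - C ξ) ^ i).natDegree = i := by
    rw [(monic_X_sub_C ξ).natDegree_pow, natDegree_X_sub_C, mul_one]
  have htri : (coeffMatrix (fun i : Fin m => (X - C ξ) ^ (i : ℕ)) m).IsLowerTriangular :=
    fun i a (h : (i : ℕ) < a) => by
      simp only [coeffMatrix_apply]
      rw [coeff_eq_zero_of_natDegree_lt (by rwa [hdeg])]
  rw [det_of_isLowerTriangular _ htri]
  refine prod_eq_one fun i _ => ?_
  simp only [coeffMatrix_apply]
  simpa [hdeg] using ((monic_X_sub_C ξ).pow (i : ℕ)).coeff_natDegree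

lemma rank_linearMap_X_sub_C_pow_mul (L : R[X] →ₗ[R] R) (a b : ℕ) (ξ : R) :
    (of fun (i : Fin a) (j : Fin b) => L ((X - C ξ) ^ (i : ℕ) * (X - C ξ) ^ (j : ℕ))).rank =
      (of fun (i : Fin a) (j : Fin b) => L (X ^ (i : ℕ) * X ^ (j : ℕ))).rank := by
  have hdeg {m : ℕ} (i : Fin m) : ((X - C ξ) ^ (i : ℕ)).natDegree < m :=
    (natDegree_X_sub_C_pow_le ξ i).trans_lt i.isLt
  have hunit (m : ℕ) : IsUnit (coeffMatrix (fun i : Fin m => (X - C ξ) ^ (i : ℕ)) m).det := by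
    rw [det_coeffMatrix_X_sub_C_pow]; exact isUnit_one
  rw [linearMap_mul_eq_coeffMatrix_mul L _ _ hdeg hdeg,
    rank_mul_eq_left_of_isUnit_det _ _ (by rw [det_transpose]; exact hunit b),
    rank_mul_eq_right_of_isUnit_det _ _ (hunit a)]

end CoeffMatrix

/-- `(apolar n P Q).eval ξ` is the paper's pairing `g(P, Q)` with all derivatives taken at `ξ`. -/
noncomputable def apolar (n : ℕ) (P Q : R[X]) : R[X] :=
  ∑ k ∈ range (n + 1), (-1) ^ k * derivative^[k] P * derivative^[n - k] Q

lemma derivative_apolar {n : ℕ} {P Q : R[X]} (hP : P.natDegree ≤ n) (hQ : Q.natDegree ≤ n) :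
    derivative (apolar n P Q) = 0 := by
  set f : ℕ → R[X] := fun k => (-1) ^ k * derivative^[k] P * derivative^[n + 1 - k] Q
  have hterm (k : ℕ) (hk : k ∈ range (n + 1)) :
      derivative ((-1) ^ k * derivative^[k] P * derivative^[n - k] Q) = f k - f (k + 1) := by
    have hk : n + 1 - k = n - k + 1 := by have := mem_range.mp hk; omega
    simp only [f, hk, Nat.add_sub_add_right, Function.iterate_succ_apply', derivative_mul,
      derivative_pow, derivative_neg, derivative_one]
    ring
  rw [apolar, derivative_sum, sum_congr rfl hterm, sum_range_sub']
  simp [f, iterate_derivative_eq_zero (Nat.lt_succ_of_le hP),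
    iterate_derivative_eq_zero (Nat.lt_succ_of_le hQ)]

lemma eval_apolar_eq_eval_zero [IsAddTorsionFree R] {n : ℕ} {P Q : R[X]} (hP : P.natDegree ≤ n)
    (hQ : Q.natDegree ≤ n) (ξ : R) : (apolar n P Q).eval ξ = (apolar n P Q).eval 0 := by
  rw [eq_C_of_derivative_eq_zero (derivative_apolar hP hQ), eval_C, eval_C]

lemma eval_apolar_X_sub_C_pow {n m : ℕ} (hm : m ≤ n) (Q : R[X]) (ξ : R) :
    (apolar n ((X - C ξ) ^ m) Q).eval ξ =
      (-1) ^ m * (m.factorial : R) * (derivative^[n - m] Q).eval ξ := by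
  rw [apolar, eval_finsetSum, sum_eq_single m]
  · simp [iterate_derivative_X_sub_pow_self]
  · intro k _ hkm
    rcases Nat.lt_or_gt_of_ne hkm with hk | hk
    · simp [iterate_derivative_X_sub_pow, Nat.sub_ne_zero_of_lt hk]
    · simp [iterate_derivative_X_sub_pow, Nat.descFactorial_eq_zero_iff_lt.mpr hk]
  · simp [Nat.lt_succ_of_le hm]

noncomputable def apolarForm (n : ℕ) (Q : R[X]) : R[X] →ₗ[R] R where
  toFun P := (apolar n P Q).eval 0
  map_add' P P' := by
    simp only [apolar, iterate_map_add, mul_add, add_mul, sum_add_distrib, eval_add]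
  map_smul' c P := by
    simp only [apolar, iterate_derivative_smul, eval_finsetSum, eval_mul, eval_smul, smul_eq_mul,
      RingHom.id_apply, mul_sum]
    exact sum_congr rfl fun k _ => by ring

@[simp]
lemma apolarForm_apply (n : ℕ) (Q P : R[X]) : apolarForm n Q P = (apolar n P Q).eval 0 :=
  rfl

end Polynomial

/-- Hankel matrices in shifted bases have equal rank.  Let `Q` be a
polynomial of degree `≤ n` over a field `K` of characteristic zero, `ξ ∈ K`,
`z_i = (-1)^i i! Q^{(n-i)}(ξ)` and `y_i = (-1)^i i! Q^{(n-i)}(0)`.  Then the Hankel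
matrices `M_ℓ = (y_{i+j})` and `N_ℓ = (z_{i+j})` (of size `(ℓ+1)×(n-ℓ+1)`) have the
same rank: they represent the same bilinear form `B_ℓ(F,G) = g(FG,Q)` in the bases
`{T^i}` and `{(T-ξ)^i}` respectively. -/
theorem stmt15 {K : Type*} [Field K] [CharZero K] (n ℓ : ℕ) (hℓ : ℓ ≤ n)
    (Q : K[X]) (hQ : Q.natDegree ≤ n) (ξ : K) :
    letI y : ℕ → K := fun i => (-1) ^ i * (i.factorial : K) * (Polynomial.derivative^[n - i] Q).eval 0
    letI z : ℕ → K := fun i => (-1) ^ i * (i.factorial : K) * (Polynomial.derivative^[n - i] Q).eval ξ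
    letI M : Matrix (Fin (ℓ + 1)) (Fin (n - ℓ + 1)) K := fun i j => y ((i : ℕ) + (j : ℕ))
    letI N : Matrix (Fin (ℓ + 1)) (Fin (n - ℓ + 1)) K := fun i j => z ((i : ℕ) + (j : ℕ))
    M.rank = N.rank := by
  have hsum (i : Fin (ℓ + 1)) (j : Fin (n - ℓ + 1)) : (i : ℕ) + j ≤ n := by omega
  convert (rank_linearMap_X_sub_C_pow_mul (apolarForm n Q) (ℓ + 1) (n - ℓ + 1) ξ).symm using 1
  · congr 1
    ext i j
    rw [of_apply, apolarForm_apply, ← pow_add]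
    simpa using (eval_apolar_X_sub_C_pow (hsum i j) Q 0).symm
  · congr 1
    ext i j
    rw [of_apply, apolarForm_apply, ← pow_add,
      ← eval_apolar_eq_eval_zero ((natDegree_X_sub_C_pow_le ξ _).trans (hsum i j)) hQ ξ,
      eval_apolar_X_sub_C_pow (hsum i j)]
end
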